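/- Let J be a binomial ideal of S = K[x_1,...,x_n] with a fixed monomial order admitting a Gröbner basis G_J consisting of binomials, and let E be a monomial ideal. Then there exists a monomial ideal F ⊇ E such that (J,F) is a Gröbner-nice pair (in(J+F) = in(J)+in(F)) and J + F = J + E. -/

import Mathlib

/-! Take `F` to be the ideal spanned by all monomials lying in `J + E`. Reducing a monomial by a
binomial leaves a single term, so every monomial is congruent modulo `J` to a nonzero multiple of
one standard monomial. Hence each `e ∈ E` is congruent modulo `J` to a combination `r` of standard
monomials that lie in `J + E`, i.e. in `F`. For `f = j + e ∈ J + E`, the standard support of `r`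
cannot cancel the leading term of `j + e - r ∈ J`, so the leading monomial of `f` is either a
monomial of `r`, hence in `in(F)`, or the leading monomial of `j + e - r`, hence in `in(J)`. -/

open MvPolynomial

variable {K : Type*} [Field K] {n : ℕ}

/-- The leading monomial (exponent vector) of a polynomial with respect to a monomial
order `m`: the maximum of the support; by convention `lm m 0 = 0`. -/
noncomputable def lm (m : MonomialOrder (Fin n)) (f : MvPolynomial (Fin n) K) :
    Fin n →₀ ℕ :=
  m.toSyn.symm (f.support.sup fun d => m.toSyn d)

/-- The initial ideal of `I`: the ideal generated by the leading monomials of the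
nonzero elements of `I`. -/
noncomputable def initialIdeal (m : MonomialOrder (Fin n))
    (I : Ideal (MvPolynomial (Fin n) K)) : Ideal (MvPolynomial (Fin n) K) :=
  Ideal.span {p | ∃ f ∈ I, f ≠ 0 ∧ p = monomial (lm m f) (1 : K)}

/-- `G` is a Gröbner basis of `I`: a finite set of nonzero polynomials generating `I`
whose leading monomials generate the initial ideal of `I`. -/
def IsGroebnerBasis (m : MonomialOrder (Fin n)) (I : Ideal (MvPolynomial (Fin n) K))
    (G : Set (MvPolynomial (Fin n) K)) : Prop :=
  G.Finite ∧ (0 : MvPolynomial (Fin n) K) ∉ G ∧ Ideal.span G = I ∧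
    Ideal.span ((fun g => monomial (lm m g) (1 : K)) '' G) = initialIdeal m I

/-- The S-polynomial `S(f,g)` with respect to the monomial order `m`. -/
noncomputable def sPoly (m : MonomialOrder (Fin n)) (f g : MvPolynomial (Fin n) K) :
    MvPolynomial (Fin n) K :=
  monomial (lm m f ⊔ lm m g - lm m f) (f.coeff (lm m f))⁻¹ * f -
    monomial (lm m f ⊔ lm m g - lm m g) (g.coeff (lm m g))⁻¹ * g

/-- An ideal is a monomial ideal if it is generated by monomials. -/
def IsMonomialIdeal (I : Ideal (MvPolynomial (Fin n) K)) : Prop :=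
  ∃ M : Set (Fin n →₀ ℕ), I = Ideal.span ((fun μ => (monomial μ (1 : K))) '' M)

section LeadingMonomial

variable (m : MonomialOrder (Fin n))

theorem lm_eq_degree (f : MvPolynomial (Fin n) K) : lm m f = m.degree f := rfl

theorem toSyn_le_lm {f : MvPolynomial (Fin n) K} {b : Fin n →₀ ℕ} (hb : b ∈ f.support) :
    m.toSyn b ≤ m.toSyn (lm m f) :=
  m.le_degree hb

theorem lm_mem_support {f : MvPolynomial (Fin n) K} (hf : f ≠ 0) : lm m f ∈ f.support :=
  m.degree_mem_support hf

theorem lm_monomial_one (μ : Fin n →₀ ℕ) : lm m (monomial μ (1 : K)) = μ := by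
  classical
  simp [lm_eq_degree, m.degree_monomial]

theorem monomial_lm_mem_initialIdeal {I : Ideal (MvPolynomial (Fin n) K)}
    {f : MvPolynomial (Fin n) K} (hf : f ∈ I) (hne : f ≠ 0) :
    monomial (lm m f) (1 : K) ∈ initialIdeal m I :=
  Ideal.subset_span ⟨f, hf, hne, rfl⟩

theorem initialIdeal_mono {I I' : Ideal (MvPolynomial (Fin n) K)} (h : I ≤ I') :
    initialIdeal m I ≤ initialIdeal m I' :=
  Ideal.span_mono fun _ ⟨f, hf, hne, hp⟩ => ⟨f, h hf, hne, hp⟩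

theorem initialIdeal_add_le (I I' : Ideal (MvPolynomial (Fin n) K)) :
    initialIdeal m I + initialIdeal m I' ≤ initialIdeal m (I + I') :=
  sup_le (initialIdeal_mono m le_sup_left) (initialIdeal_mono m le_sup_right)

theorem IsGroebnerBasis.exists_lm_le {I : Ideal (MvPolynomial (Fin n) K)}
    {G : Set (MvPolynomial (Fin n) K)} (hG : IsGroebnerBasis m I G)
    {f : MvPolynomial (Fin n) K} (hf : f ∈ I) (hne : f ≠ 0) :
    ∃ g ∈ G, lm m g ≤ lm m f := by
  have h := monomial_lm_mem_initialIdeal m hf hne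
  rw [← hG.2.2.2, ← Set.image_image (fun μ => monomial μ (1 : K)) (lm m),
    mem_ideal_span_monomial_image] at h
  obtain ⟨_, ⟨g, hg, rfl⟩, hle⟩ := h (lm m f) (by simp)
  exact ⟨g, hg, hle⟩

theorem exists_eq_monomial_lm_add_monomial {g : MvPolynomial (Fin n) K}
    (hg : g.support.card = 2) :
    ∃ (β : Fin n →₀ ℕ) (a b : K), a ≠ 0 ∧ b ≠ 0 ∧ m.toSyn β < m.toSyn (lm m g) ∧
      g = monomial (lm m g) a + monomial β b := by
  have hne : g ≠ 0 := by rintro rfl; simp at hg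
  obtain ⟨β, hβ, hsupp⟩ : ∃ β, β ≠ lm m g ∧ g.support = {lm m g, β} := by
    obtain ⟨α₀, β₀, hαβ, hsupp⟩ := Finset.card_eq_two.mp hg
    have hlm := lm_mem_support m hne
    rw [hsupp, Finset.mem_insert, Finset.mem_singleton] at hlm
    rcases hlm with h | h
    · exact ⟨β₀, h ▸ hαβ.symm, h ▸ hsupp⟩
    · exact ⟨α₀, h ▸ hαβ, h ▸ hsupp.trans (Finset.pair_comm _ _)⟩
  have hβmem : β ∈ g.support := by simp [hsupp]
  refine ⟨β, g.coeff (lm m g), g.coeff β, m.coeff_degree_ne_zero_iff.mpr hne,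
    mem_support_iff.mp hβmem,
    (toSyn_le_lm m hβmem).lt_of_ne (m.toSyn.injective.ne hβ), ?_⟩
  conv_lhs => rw [as_sum g, hsupp, Finset.sum_pair hβ.symm]

end LeadingMonomial

/-- For a Gröbner basis `G` of `J` these are the exponents of the standard monomials, those
outside `in(J)`. -/
def IsStandardMonomial (m : MonomialOrder (Fin n)) (G : Set (MvPolynomial (Fin n) K))
    (ν : Fin n →₀ ℕ) : Prop :=
  ∀ g ∈ G, ¬ lm m g ≤ ν

section NormalForm

variable (m : MonomialOrder (Fin n)) {J : Ideal (MvPolynomial (Fin n) K)}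
  {G : Set (MvPolynomial (Fin n) K)}

theorem exists_monomial_sub_monomial_mem (hGJ : G ⊆ J) (hbin : ∀ g ∈ G, g.support.card = 2)
    (μ : Fin n →₀ ℕ) :
    ∃ (ν : Fin n →₀ ℕ) (c : K), c ≠ 0 ∧ monomial μ 1 - monomial ν c ∈ J ∧
      IsStandardMonomial m G ν := by
  induction hs : m.toSyn μ using WellFoundedLT.induction generalizing μ with
  | _ s ih =>
    subst hs
    by_cases hstd : IsStandardMonomial m G μ
    · exact ⟨μ, 1, one_ne_zero, by simp, hstd⟩
    obtain ⟨g, hg, hle⟩ : ∃ g ∈ G, lm m g ≤ μ := by simpa [IsStandardMonomial] using hstd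
    obtain ⟨β, a, b, ha, hb, hβ, hgeq⟩ := exists_eq_monomial_lm_add_monomial m (hbin g hg)
    set α := lm m g
    have hμ : μ - α + α = μ := tsub_add_cancel_of_le hle
    have hlt : m.toSyn (μ - α + β) < m.toSyn μ := by
      conv_rhs => rw [← hμ]
      simpa only [map_add] using add_lt_add_right hβ _
    obtain ⟨ν, c, hc, hmem, hν⟩ := ih _ hlt _ rfl
    refine ⟨ν, -(a⁻¹ * b * c), by simp [ha, hb, hc], ?_, hν⟩
    have hrel : monomial μ 1 - monomial ν (-(a⁻¹ * b * c)) =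
        monomial (μ - α) a⁻¹ * g -
          C (a⁻¹ * b) * (monomial (μ - α + β) 1 - monomial ν c) := by
      rw [hgeq, mul_add, monomial_mul, monomial_mul, hμ, inv_mul_cancel₀ ha, mul_sub,
        C_mul_monomial, C_mul_monomial, mul_one, map_neg]
      ring
    rw [hrel]
    exact sub_mem (Ideal.mul_mem_left _ _ (hGJ hg)) (Ideal.mul_mem_left _ _ hmem)

end NormalForm

theorem IsMonomialIdeal.monomial_mem {I : Ideal (MvPolynomial (Fin n) K)}
    (hI : IsMonomialIdeal I) {f : MvPolynomial (Fin n) K} (hf : f ∈ I)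
    {b : Fin n →₀ ℕ} (hb : b ∈ f.support) : monomial b (1 : K) ∈ I := by
  obtain ⟨M, rfl⟩ := hI
  obtain ⟨a, ha, hle⟩ := mem_ideal_span_monomial_image.mp hf b hb
  have hsplit : monomial b (1 : K) = monomial (b - a) 1 * monomial a 1 := by
    rw [monomial_mul, one_mul, tsub_add_cancel_of_le hle]
  rw [hsplit]
  exact Ideal.mul_mem_left _ _ (Ideal.subset_span ⟨a, ha, rfl⟩)

noncomputable def monomialPart (I : Ideal (MvPolynomial (Fin n) K)) :
    Ideal (MvPolynomial (Fin n) K) :=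
  Ideal.span ((fun ν => monomial ν (1 : K)) '' {ν | monomial ν (1 : K) ∈ I})

theorem isMonomialIdeal_monomialPart (I : Ideal (MvPolynomial (Fin n) K)) :
    IsMonomialIdeal (monomialPart I) :=
  ⟨_, rfl⟩

theorem monomialPart_le (I : Ideal (MvPolynomial (Fin n) K)) : monomialPart I ≤ I :=
  Ideal.span_le.mpr <| Set.image_subset_iff.mpr fun _ h => h

theorem monomial_mem_monomialPart {I : Ideal (MvPolynomial (Fin n) K)} {ν : Fin n →₀ ℕ}
    (h : monomial ν (1 : K) ∈ I) : monomial ν (1 : K) ∈ monomialPart I :=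
  Ideal.subset_span ⟨ν, h, rfl⟩

theorem le_monomialPart {E I : Ideal (MvPolynomial (Fin n) K)} (hE : IsMonomialIdeal E)
    (hle : E ≤ I) : E ≤ monomialPart I := fun _ he =>
  mem_ideal_span_monomial_image.mpr fun b hb => ⟨b, hle (hE.monomial_mem he hb), le_rfl⟩

section Reduction

variable (m : MonomialOrder (Fin n)) {J E : Ideal (MvPolynomial (Fin n) K)}
  {G : Set (MvPolynomial (Fin n) K)}

theorem exists_standard_sub_mem_of_mem_monomialIdeal (hGJ : G ⊆ J)
    (hbin : ∀ g ∈ G, g.support.card = 2) (hE : IsMonomialIdeal E)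
    {e : MvPolynomial (Fin n) K} (he : e ∈ E) :
    ∃ r : MvPolynomial (Fin n) K, e - r ∈ J ∧
      ∀ τ ∈ r.support, IsStandardMonomial m G τ ∧ monomial τ (1 : K) ∈ J + E := by
  classical
  choose ν c hc hmem hstd using exists_monomial_sub_monomial_mem m hGJ hbin
  refine ⟨∑ b ∈ e.support, monomial (ν b) (e.coeff b * c b), ?_, fun τ hτ => ?_⟩
  · have hsub : e - ∑ b ∈ e.support, monomial (ν b) (e.coeff b * c b) =
        ∑ b ∈ e.support, C (e.coeff b) * (monomial b 1 - monomial (ν b) (c b)) := by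
      nth_rewrite 1 [as_sum e]
      rw [← Finset.sum_sub_distrib]
      simp only [mul_sub, C_mul_monomial, mul_one]
    rw [hsub]
    exact Ideal.sum_mem _ fun b _ => Ideal.mul_mem_left _ _ (hmem b)
  obtain ⟨b, hb, hτ⟩ := Finset.mem_biUnion.mp (support_sum hτ)
  obtain rfl := Finset.mem_singleton.mp (support_monomial_subset hτ)
  refine ⟨hstd b, ?_⟩
  have hνb : monomial (ν b) (c b) ∈ J + E :=
    sub_sub_cancel (monomial b 1) (monomial (ν b) (c b)) ▸
      sub_mem (Ideal.mem_sup_right (hE.monomial_mem he hb)) (Ideal.mem_sup_left (hmem b))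
  simpa [C_mul_monomial, hc b] using Ideal.mul_mem_left _ (C (c b)⁻¹) hνb

theorem monomial_lm_add_mem_initialIdeal_or_mem_support (hG : IsGroebnerBasis m J G)
    {j r : MvPolynomial (Fin n) K} (hj : j ∈ J)
    (hr : ∀ τ ∈ r.support, IsStandardMonomial m G τ) (hne : j + r ≠ 0) :
    monomial (lm m (j + r)) (1 : K) ∈ initialIdeal m J ∨ lm m (j + r) ∈ r.support := by
  refine or_iff_not_imp_right.mpr fun hnot => ?_
  have hcoeff : j.coeff (lm m (j + r)) ≠ 0 := by
    have h := m.coeff_degree_ne_zero_iff.mpr hne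
    rwa [← lm_eq_degree, coeff_add, notMem_support_iff.mp hnot, add_zero] at h
  have hj0 : j ≠ 0 := by rintro rfl; simp at hcoeff
  obtain ⟨g, hg, hgj⟩ := hG.exists_lm_le m hj hj0
  have hlm_j : lm m j ∈ (j + r).support := by
    have hr0 : r.coeff (lm m j) = 0 :=
      notMem_support_iff.mp fun h => hr _ h g hg hgj
    simpa [hr0] using lm_mem_support m hj0
  have heq : lm m (j + r) = lm m j := m.toSyn.injective <|
    le_antisymm (toSyn_le_lm m (mem_support_iff.mpr hcoeff)) (toSyn_le_lm m hlm_j)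
  exact heq ▸ monomial_lm_mem_initialIdeal m hj hj0

end Reduction

/-- If `J` has a Gröbner basis consisting of binomials and `E` is a monomial ideal,
then there is a monomial ideal `F ⊇ E` with `(J,F)` Gröbner-nice and `J + F = J + E`. -/
theorem stmt19 (m : MonomialOrder (Fin n)) (J E : Ideal (MvPolynomial (Fin n) K))
    (GJ : Set (MvPolynomial (Fin n) K)) (hGJ : IsGroebnerBasis m J GJ)
    (hbin : ∀ g ∈ GJ, g.support.card = 2)
    (hE : IsMonomialIdeal E) :
    ∃ F : Ideal (MvPolynomial (Fin n) K), IsMonomialIdeal F ∧ E ≤ F ∧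
      initialIdeal m (J + F) = initialIdeal m J + initialIdeal m F ∧
      J + F = J + E := by
  have hEF : E ≤ monomialPart (J + E) := le_monomialPart hE le_sup_right
  have hJF : J + monomialPart (J + E) = J + E :=
    le_antisymm (sup_le le_sup_left (monomialPart_le _))
      (sup_le le_sup_left (hEF.trans le_sup_right))
  refine ⟨monomialPart (J + E), isMonomialIdeal_monomialPart _, hEF,
    le_antisymm ?_ (initialIdeal_add_le m _ _), hJF⟩
  rw [initialIdeal, Ideal.span_le]
  rintro _ ⟨f, hf, hne, rfl⟩
  rw [hJF] at hf
  obtain ⟨j, hj, e, he, rfl⟩ := Submodule.mem_sup.mp hf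
  obtain ⟨r, hr, hrstd⟩ :=
    exists_standard_sub_mem_of_mem_monomialIdeal m (Ideal.span_le.mp hGJ.2.2.1.le) hbin hE he
  have hsplit : j + e = (j + (e - r)) + r := by ring
  rw [hsplit] at hne ⊢
  rcases monomial_lm_add_mem_initialIdeal_or_mem_support m hGJ (J.add_mem hj hr)
      (fun τ hτ => (hrstd τ hτ).1) hne with hin | hsupp
  · exact Ideal.mem_sup_left hin
  · have hmem := monomial_mem_monomialPart (hrstd _ hsupp).2
    have hin := monomial_lm_mem_initialIdeal m hmem (monomial_eq_zero.not.mpr one_ne_zero)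
    rw [lm_monomial_one] at hin
    exact Ideal.mem_sup_right hin
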